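/- arXiv:1803.02219 — 2 statements merged into one kernel-verified Lean document; each statement's English description precedes it below -/
import Mathlib

section
/- For L ≥ 4 even, define D₀(L) = {0, L} ∪ {1, 3, ..., L−1}, D₁(L) = {0, 1, L−1, L}, and D₂(L) = {2, 4, ..., L−2}. Then (D₀(L) + D₂(L)) ∪ (D₁(L) + D₁(L)) = {0, 1, ..., 2L}. -/
/-!
Every element of `D₀`, `D₁` lies in `[0, L]` and every element of `D₂` in `[2, L - 2]`, which gives
one inclusion. Conversely, an even `n ∈ [2, 2L - 2]` other than `L` is `0 + n` or `L + (n - L)`, and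
an odd `n ∈ [3, 2L - 3]` is `1 + (n - 1)` or `(n - L + 2) + (L - 2)`; these are sums from `D₀ + D₂`
because `L` is even. The five remaining values `0, 1, L, 2L - 1, 2L` are sums of two elements of `D₁`.
-/

open Pointwise

/-- `D₀(L) = {0, L} ∪ {odd n : 1 ≤ n ≤ L-1}`. -/
def D0 (L : ℤ) : Set ℤ := {0, L} ∪ {n : ℤ | Odd n ∧ 1 ≤ n ∧ n ≤ L - 1}

/-- `D₁(L) = {0, 1, L-1, L}`. -/
def D1 (L : ℤ) : Set ℤ := {0, 1, L - 1, L}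

/-- `D₂(L) = {even n : 2 ≤ n ≤ L-2}`. -/
def D2 (L : ℤ) : Set ℤ := {n : ℤ | Even n ∧ 2 ≤ n ∧ n ≤ L - 2}

section

variable {L n : ℤ}

lemma D0_subset_Icc (hL : 0 ≤ L) : D0 L ⊆ Set.Icc 0 L := by
  rintro n (hn | ⟨-, h1, hL1⟩)
  · rcases hn with rfl | rfl <;> simp [hL]
  · exact ⟨by omega, by omega⟩

lemma D1_subset_Icc (hL : 1 ≤ L) : D1 L ⊆ Set.Icc 0 L := by
  rintro n (rfl | rfl | rfl | rfl) <;> constructor <;> omega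

lemma D2_subset_Icc (L : ℤ) : D2 L ⊆ Set.Icc 2 (L - 2) :=
  fun _ ⟨_, h2, hL2⟩ => ⟨h2, hL2⟩

lemma D0_add_D2_subset_Icc (hL : 0 ≤ L) : D0 L + D2 L ⊆ Set.Icc 0 (2 * L) :=
  (Set.add_subset_add (D0_subset_Icc hL) (D2_subset_Icc L)).trans <|
    (Set.Icc_add_Icc_subset _ _ _ _).trans (Set.Icc_subset_Icc (by norm_num) (by linarith))

lemma D1_add_D1_subset_Icc (hL : 1 ≤ L) : D1 L + D1 L ⊆ Set.Icc 0 (2 * L) :=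
  (Set.add_subset_add (D1_subset_Icc hL) (D1_subset_Icc hL)).trans <|
    (Set.Icc_add_Icc_subset _ _ _ _).trans (Set.Icc_subset_Icc le_rfl (by linarith))

lemma mem_D0_add_D2_of_even (hL : Even L) (hn : Even n) (h2 : 2 ≤ n) (hn2 : n ≤ 2 * L - 2)
    (hnL : n ≠ L) : n ∈ D0 L + D2 L := by
  rw [Int.even_iff] at hL hn
  by_cases hlow : n ≤ L - 2
  · exact ⟨0, Or.inl (by simp), n, ⟨Int.even_iff.2 hn, h2, hlow⟩, zero_add n⟩
  · exact ⟨L, Or.inl (by simp), n - L, ⟨Int.even_iff.2 (by omega), by omega, by omega⟩,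
      add_sub_cancel L n⟩

lemma mem_D0_add_D2_of_odd (hL : Even L) (hn : Odd n) (h3 : 3 ≤ n) (hn3 : n ≤ 2 * L - 3) :
    n ∈ D0 L + D2 L := by
  rw [Int.even_iff] at hL
  rw [Int.odd_iff] at hn
  by_cases hlow : n ≤ L - 1
  · exact ⟨1, Or.inr ⟨odd_one, le_rfl, by omega⟩, n - 1,
      ⟨Int.even_iff.2 (by omega), by omega, by omega⟩, add_sub_cancel 1 n⟩
  · exact ⟨n - L + 2, Or.inr ⟨Int.odd_iff.2 (by omega), by omega, by omega⟩, L - 2,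
      ⟨Int.even_iff.2 (by omega), by omega, le_rfl⟩, by ring⟩

lemma subset_D1_add_D1 (L : ℤ) : {0, 1, L, 2 * L - 1, 2 * L} ⊆ D1 L + D1 L := by
  rintro n (rfl | rfl | hn | rfl | rfl)
  · exact ⟨0, by simp [D1], 0, by simp [D1], zero_add 0⟩
  · exact ⟨0, by simp [D1], 1, by simp [D1], zero_add 1⟩
  · exact ⟨0, by simp [D1], L, by simp [D1], by simp [hn]⟩
  · exact ⟨L - 1, by simp [D1], L, by simp [D1], by ring⟩
  · exact ⟨L, by simp [D1], L, by simp [D1], by ring⟩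

end

/-- For even `L ≥ 4`, `(D₀+D₂) ∪ (D₁+D₁) = {0,…,2L}`. -/
theorem stmt_6 (L : ℤ) (hL : 4 ≤ L) (hE : Even L) :
    (D0 L + D2 L) ∪ (D1 L + D1 L) = {n : ℤ | 0 ≤ n ∧ n ≤ 2 * L} := by
  refine Set.Subset.antisymm
    (Set.union_subset (D0_add_D2_subset_Icc (by omega)) (D1_add_D1_subset_Icc (by omega)))
    fun n ⟨h0, h2L⟩ => ?_
  by_cases hD1 : n ∈ ({0, 1, L, 2 * L - 1, 2 * L} : Set ℤ)
  · exact Or.inr (subset_D1_add_D1 L hD1)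
  simp only [Set.mem_insert_iff, Set.mem_singleton_iff, not_or] at hD1
  have hL_mod := Int.even_iff.1 hE
  left
  rcases Int.even_or_odd n with hn | hn
  · have hn_mod := Int.even_iff.1 hn
    exact mem_D0_add_D2_of_even hE hn (by omega) (by omega) hD1.2.2.1
  · have hn_mod := Int.odd_iff.1 hn
    exact mem_D0_add_D2_of_odd hE hn (by omega) (by omega)
end

section
/- For even L ≥ 6, the Concentric Rectangular Array D_CRA (square case, L_x = L_y = L) satisfies D_CRA − D_CRA = {−L,...,L} × {−L,...,L}, i.e., it has a contiguous difference co-array. -/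
open Pointwise

/-- The square Concentric Rectangular Array (CRA) with `L_x = L_y = L`:
the union over `i ∈ {0,1,2}` of `D_i(L) × {i, L-i}` and `{i, L-i} × D_i(L)`. -/
def CRA (L : ℤ) : Set (ℤ × ℤ) :=
  {p : ℤ × ℤ | (p.1 ∈ D0 L ∧ (p.2 = 0 ∨ p.2 = L)) ∨ ((p.1 = 0 ∨ p.1 = L) ∧ p.2 ∈ D0 L) ∨
    (p.1 ∈ D1 L ∧ (p.2 = 1 ∨ p.2 = L - 1)) ∨ ((p.1 = 1 ∨ p.1 = L - 1) ∧ p.2 ∈ D1 L) ∨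
    (p.1 ∈ D2 L ∧ (p.2 = 2 ∨ p.2 = L - 2)) ∨ ((p.1 = 2 ∨ p.1 = L - 2) ∧ p.2 ∈ D2 L)}

/-!
The array lies in `[0, L]²`, which gives one inclusion. It is invariant under swapping the
coordinates and, `L` being even, under `x ↦ L - x`; so its difference set is invariant under
swapping and negating coordinates, and it suffices to reach every point of `[0, L]²`. Points with
a coordinate in `{0, L}` come from the outer frame, because `D₀ - D₀ ⊇ [0, L]`. The others are
split by the parities of their coordinates, each case being the difference of two explicit array
points; the `D₂` frame supplies those with an even interior coordinate.
-/

theorem apply_mem_sub_of_mapsTo {G : Type*} [Sub G] {S : Set G} {f g : G → G}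
    (hf : Set.MapsTo f S S) (hfg : ∀ a b, f a - f b = g (a - b)) {d : G} (hd : d ∈ S - S) :
    g d ∈ S - S := by
  obtain ⟨a, ha, b, hb, rfl⟩ := hd
  exact ⟨f a, hf ha, f b, hf hb, hfg a b⟩

theorem mk_mem_sub_of_sub_eq {α β : Type*} [Sub α] [Sub β] {s t : Set (α × β)}
    {a c x : α} {b d y : β} (hab : (a, b) ∈ s) (hcd : (c, d) ∈ t) (hx : a - c = x)
    (hy : b - d = y) : (x, y) ∈ s - t :=
  ⟨_, hab, _, hcd, by simp only [Prod.mk_sub_mk, hx, hy]⟩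

section CRA

variable {L n x y : ℤ}

theorem mem_D0_iff : n ∈ D0 L ↔ n = 0 ∨ n = L ∨ n % 2 = 1 ∧ 1 ≤ n ∧ n ≤ L - 1 := by
  simp only [D0, Set.mem_union, Set.mem_insert_iff, Set.mem_singleton_iff, Set.mem_ofPred_eq,
    Int.odd_iff, or_assoc]

theorem mem_D1_iff : n ∈ D1 L ↔ n = 0 ∨ n = 1 ∨ n = L - 1 ∨ n = L := by
  simp only [D1, Set.mem_insert_iff, Set.mem_singleton_iff]

theorem mem_D2_iff : n ∈ D2 L ↔ n % 2 = 0 ∧ 2 ≤ n ∧ n ≤ L - 2 := by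
  simp only [D2, Set.mem_ofPred_eq, Int.even_iff]

theorem sub_mem_D0 (hE : Even L) (h : n ∈ D0 L) : L - n ∈ D0 L := by
  rw [Int.even_iff] at hE
  rw [mem_D0_iff] at h ⊢
  omega

theorem sub_mem_D1 (h : n ∈ D1 L) : L - n ∈ D1 L := by
  rw [mem_D1_iff] at h ⊢
  omega

theorem sub_mem_D2 (hE : Even L) (h : n ∈ D2 L) : L - n ∈ D2 L := by
  rw [Int.even_iff] at hE
  rw [mem_D2_iff] at h ⊢
  omega

theorem mk_mem_CRA_of_mem_D0 (hx : x ∈ D0 L) (hy : y = 0 ∨ y = L) : (x, y) ∈ CRA L :=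
  Or.inl ⟨hx, hy⟩

theorem mk_mem_CRA_of_mem_D1 (hx : x ∈ D1 L) (hy : y = 1 ∨ y = L - 1) : (x, y) ∈ CRA L :=
  Or.inr (Or.inr (Or.inl ⟨hx, hy⟩))

theorem mk_mem_CRA_of_mem_D2 (hx : x ∈ D2 L) (hy : y = 2 ∨ y = L - 2) : (x, y) ∈ CRA L :=
  Or.inr (Or.inr (Or.inr (Or.inr (Or.inl ⟨hx, hy⟩))))

theorem swap_mem_CRA {p : ℤ × ℤ} (h : p ∈ CRA L) : p.swap ∈ CRA L := by
  simp only [CRA, Set.mem_ofPred_eq, Prod.fst_swap, Prod.snd_swap] at h ⊢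
  tauto

theorem sub_fst_mem_CRA (hE : Even L) (h : (x, y) ∈ CRA L) : (L - x, y) ∈ CRA L := by
  rcases h with ⟨hx, hy⟩ | ⟨hx, hy⟩ | ⟨hx, hy⟩ | ⟨hx, hy⟩ | ⟨hx, hy⟩ | ⟨hx, hy⟩
  · exact Or.inl ⟨sub_mem_D0 hE hx, hy⟩
  · exact Or.inr (Or.inl ⟨by omega, hy⟩)
  · exact Or.inr (Or.inr (Or.inl ⟨sub_mem_D1 hx, hy⟩))
  · exact Or.inr (Or.inr (Or.inr (Or.inl ⟨by omega, hy⟩)))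
  · exact Or.inr (Or.inr (Or.inr (Or.inr (Or.inl ⟨sub_mem_D2 hE hx, hy⟩))))
  · exact Or.inr (Or.inr (Or.inr (Or.inr (Or.inr ⟨by omega, hy⟩))))

theorem CRA_bounds (hL : 1 ≤ L) {p : ℤ × ℤ} (h : p ∈ CRA L) :
    0 ≤ p.1 ∧ p.1 ≤ L ∧ 0 ≤ p.2 ∧ p.2 ≤ L := by
  simp only [CRA, Set.mem_ofPred_eq, mem_D0_iff, mem_D1_iff, mem_D2_iff] at h
  omega

theorem swap_mem_CRA_sub {p : ℤ × ℤ} (h : p ∈ CRA L - CRA L) : p.swap ∈ CRA L - CRA L :=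
  apply_mem_sub_of_mapsTo (fun _ => swap_mem_CRA) (fun _ _ => rfl) h

theorem neg_fst_mem_CRA_sub (hE : Even L) (h : (x, y) ∈ CRA L - CRA L) :
    (-x, y) ∈ CRA L - CRA L :=
  apply_mem_sub_of_mapsTo (f := fun p => (L - p.1, p.2)) (g := fun p => (-p.1, p.2))
    (fun _ hp => sub_fst_mem_CRA hE hp) (fun a b => Prod.ext (by simp only [Prod.fst_sub]; ring) rfl) h

theorem mem_CRA_sub_of_abs_fst (hE : Even L) (h : (|x|, y) ∈ CRA L - CRA L) :
    (x, y) ∈ CRA L - CRA L := by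
  rcases abs_cases x with ⟨hx, -⟩ | ⟨hx, -⟩ <;> rw [hx] at h
  · exact h
  · simpa using neg_fst_mem_CRA_sub hE h

theorem mem_CRA_sub_of_abs (hE : Even L) (h : (|x|, |y|) ∈ CRA L - CRA L) :
    (x, y) ∈ CRA L - CRA L :=
  have h' : (|y|, x) ∈ CRA L - CRA L := swap_mem_CRA_sub (mem_CRA_sub_of_abs_fst hE h)
  swap_mem_CRA_sub (mem_CRA_sub_of_abs_fst hE h')

theorem Icc_subset_D0_sub_D0 : Set.Icc 0 L ⊆ D0 L - D0 L := by
  rintro d ⟨hd0, hdL⟩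
  by_cases hd : d ∈ D0 L
  · exact ⟨d, hd, 0, mem_D0_iff.2 (Or.inl rfl), sub_zero d⟩
  · rw [mem_D0_iff] at hd
    exact ⟨d + 1, mem_D0_iff.2 (by omega), 1, mem_D0_iff.2 (by omega), add_sub_cancel_right d 1⟩

theorem mk_mem_CRA_sub_of_edge (hx0 : 0 ≤ x) (hxL : x ≤ L) (hy : y = 0 ∨ y = L) :
    (x, y) ∈ CRA L - CRA L := by
  obtain ⟨a, ha, b, hb, rfl⟩ := Icc_subset_D0_sub_D0 ⟨hx0, hxL⟩
  exact mk_mem_sub_of_sub_eq (mk_mem_CRA_of_mem_D0 ha hy) (mk_mem_CRA_of_mem_D0 hb (Or.inl rfl))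
    rfl (sub_zero y)

theorem mk_mem_CRA_sub_of_odd_odd (hE : Even L) (hx : Odd x) (hy : Odd y) (hx0 : 0 ≤ x)
    (hxL : x ≤ L) (hy0 : 0 ≤ y) (hyL : y ≤ L) : (x, y) ∈ CRA L - CRA L := by
  rw [Int.even_iff] at hE
  rw [Int.odd_iff] at hx hy
  exact mk_mem_sub_of_sub_eq
    (swap_mem_CRA (mk_mem_CRA_of_mem_D0 (x := y) (mem_D0_iff.2 (by omega)) (Or.inr rfl)))
    (mk_mem_CRA_of_mem_D0 (x := L - x) (mem_D0_iff.2 (by omega)) (Or.inl rfl))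
    (by omega) (sub_zero y)

theorem mk_mem_CRA_sub_of_odd_even (hE : Even L) (hx : Odd x) (hy : Even y) (hx0 : 0 ≤ x)
    (hxL : x ≤ L) (hy0 : 0 < y) (hyL : y < L) : (x, y) ∈ CRA L - CRA L := by
  rw [Int.even_iff] at hE hy
  rw [Int.odd_iff] at hx
  by_cases hxL1 : x = L - 1
  · exact mk_mem_sub_of_sub_eq
      (mk_mem_CRA_of_mem_D1 (x := L - 1) (mem_D1_iff.2 (by omega)) (Or.inr rfl))
      (swap_mem_CRA (mk_mem_CRA_of_mem_D0 (x := L - 1 - y) (mem_D0_iff.2 (by omega)) (Or.inl rfl)))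
      (by omega) (by omega)
  · exact mk_mem_sub_of_sub_eq
      (swap_mem_CRA (mk_mem_CRA_of_mem_D2 (x := y) (mem_D2_iff.2 (by omega)) (Or.inr rfl)))
      (mk_mem_CRA_of_mem_D0 (x := L - 2 - x) (mem_D0_iff.2 (by omega)) (Or.inl rfl))
      (by omega) (sub_zero y)

theorem mk_mem_CRA_sub_of_even_even (hE : Even L) (hx : Even x) (hy : Even y) (hx0 : 0 < x)
    (hxL : x < L) (hy0 : 0 < y) (hyL : y < L) : (x, y) ∈ CRA L - CRA L := by
  rw [Int.even_iff] at hE hx hy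
  by_cases hedge : x = L - 2 ∨ y = L - 2
  · have hxy : (x, y) ∈ CRA L := by
      rcases hedge with rfl | rfl
      · exact swap_mem_CRA (mk_mem_CRA_of_mem_D2 (mem_D2_iff.2 (by omega)) (Or.inr rfl))
      · exact mk_mem_CRA_of_mem_D2 (mem_D2_iff.2 (by omega)) (Or.inr rfl)
    exact mk_mem_sub_of_sub_eq hxy (mk_mem_CRA_of_mem_D0 (mem_D0_iff.2 (Or.inl rfl)) (Or.inl rfl))
      (sub_zero x) (sub_zero y)
  · exact mk_mem_sub_of_sub_eq
      (swap_mem_CRA (mk_mem_CRA_of_mem_D2 (x := y + 2) (mem_D2_iff.2 (by omega)) (Or.inr rfl)))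
      (mk_mem_CRA_of_mem_D2 (x := L - 2 - x) (mem_D2_iff.2 (by omega)) (Or.inl rfl))
      (by omega) (by omega)

theorem mk_mem_CRA_sub_of_nonneg (hE : Even L) (hx0 : 0 ≤ x) (hxL : x ≤ L) (hy0 : 0 ≤ y)
    (hyL : y ≤ L) : (x, y) ∈ CRA L - CRA L := by
  by_cases hy : y = 0 ∨ y = L
  · exact mk_mem_CRA_sub_of_edge hx0 hxL hy
  by_cases hx : x = 0 ∨ x = L
  · exact swap_mem_CRA_sub (mk_mem_CRA_sub_of_edge hy0 hyL hx)
  rcases Int.even_or_odd x with hxe | hxo <;> rcases Int.even_or_odd y with hye | hyo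
  · exact mk_mem_CRA_sub_of_even_even hE hxe hye (by omega) (by omega) (by omega) (by omega)
  · exact swap_mem_CRA_sub
      (mk_mem_CRA_sub_of_odd_even hE hyo hxe hy0 hyL (by omega) (by omega))
  · exact mk_mem_CRA_sub_of_odd_even hE hxo hye hx0 hxL (by omega) (by omega)
  · exact mk_mem_CRA_sub_of_odd_odd hE hxo hyo hx0 hxL hy0 hyL

end CRA

/-- The CRA has a contiguous difference co-array. -/
theorem stmt_8 (L : ℤ) (hL : 6 ≤ L) (hE : Even L) :
    CRA L - CRA L = {p : ℤ × ℤ | -L ≤ p.1 ∧ p.1 ≤ L ∧ -L ≤ p.2 ∧ p.2 ≤ L} := by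
  ext ⟨x, y⟩
  constructor
  · rintro ⟨⟨a₁, a₂⟩, ha, ⟨b₁, b₂⟩, hb, hab⟩
    obtain ⟨rfl, rfl⟩ := Prod.mk.inj hab
    have := CRA_bounds (by omega) ha
    have := CRA_bounds (by omega) hb
    simp only [Set.mem_ofPred_eq] at *
    omega
  · rintro ⟨hx₀, hxL, hy₀, hyL⟩
    exact mem_CRA_sub_of_abs hE (mk_mem_CRA_sub_of_nonneg hE (abs_nonneg x)
      (abs_le.2 ⟨hx₀, hxL⟩) (abs_nonneg y) (abs_le.2 ⟨hy₀, hyL⟩))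
end
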